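/- arXiv:2109.10076 — 7 statements merged into one kernel-verified Lean document; each statement's English description precedes it below -/
import Mathlib

section
/- Let 0 < ε' < 1, β ≥ 1, and 0 < LB ≤ UB be real numbers such that F_i(x) ∈ {0} ∪ [LB, UB] for all x ∈ X and all i ∈ {0,...,K}. Let ∅ ≠ I ⊊ {0,...,K} be an index set and let w ∈ ℝ^{K+1}_≥ be a weight with ∑_{i∈I} w_i = (ε'·LB)/(β·UB) · min_{j∉I} w_j. Then any solution x ∈ X that is a β-approximation for w (i.e., ∑_{i=0}^K w_i F_i(x) ≤ β · ∑_{i=0}^K w_i F_i(x') for all x' ∈ X) satisfies ∑_{j∉I} w_j F_j(x) ≤ (β + ε') · ∑_{j∉I} w_j F_j(x') for all x' ∈ X; that is, x is a (β+ε')-approximation for the projected weight proj^I(w) obtained by setting the components of w with indices in I to zero. -/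
theorem stmt2 {X : Type*} [Nonempty X] {K : ℕ} (F : Fin (K+1) → X → ℝ)
    (LB UB : ℝ) (hLB : 0 < LB) (hLBUB : LB ≤ UB)
    (hF : ∀ x i, F i x = 0 ∨ F i x ∈ Set.Icc LB UB)
    (ε' β : ℝ) (hε : 0 < ε') (hε1 : ε' < 1) (hβ : 1 ≤ β)
    (I : Finset (Fin (K+1))) (hI : I.Nonempty) (hIc : Iᶜ.Nonempty)
    (w : Fin (K+1) → ℝ) (hw : ∀ i, 0 ≤ w i)
    (hwI : ∑ i ∈ I, w i = (ε' * LB) / (β * UB) * Iᶜ.inf' hIc w)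
    (x : X) (hx : ∀ x' : X, ∑ i, w i * F i x ≤ β * ∑ i, w i * F i x') :
    ∀ x' : X, ∑ j ∈ Iᶜ, w j * F j x ≤ (β + ε') * ∑ j ∈ Iᶜ, w j * F j x' := by
  intro x'
  set m := Iᶜ.inf' hIc w with hm
  have hUB : 0 < UB := lt_of_lt_of_le hLB hLBUB
  have hβ0 : 0 < β := lt_of_lt_of_le one_pos hβ
  have hm0 : 0 ≤ m := Finset.le_inf' hIc w (fun j _ => hw j)
  have hnn : ∀ (y : X) (j : Fin (K+1)), 0 ≤ w j * F j y := by
    intro y j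
    rcases hF y j with h | h
    · simp [h]
    · exact mul_nonneg (hw j) (le_trans hLB.le h.1)
  have hterm : ∀ (y : X) (j : Fin (K+1)), j ∈ Iᶜ → w j * F j y = 0 ∨ m * LB ≤ w j * F j y := by
    intro y j hj
    rcases hF y j with h | h
    · left; simp [h]
    · right
      have hwj : m ≤ w j := Finset.inf'_le w hj
      calc m * LB ≤ w j * LB := mul_le_mul_of_nonneg_right hwj hLB.le
        _ ≤ w j * F j y := mul_le_mul_of_nonneg_left h.1 (hw j)
  have hIbound : ∀ y : X, ∑ i ∈ I, w i * F i y ≤ UB * ∑ i ∈ I, w i := by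
    intro y
    rw [Finset.mul_sum]
    apply Finset.sum_le_sum
    intro i _
    rcases hF y i with h | h
    · simp [h]
      exact mul_nonneg hUB.le (hw i)
    · calc w i * F i y ≤ w i * UB := mul_le_mul_of_nonneg_left h.2 (hw i)
        _ = UB * w i := mul_comm _ _
  have hkey : ∀ y : X, β * ∑ i ∈ I, w i * F i y ≤ ε' * LB * m := by
    intro y
    calc β * ∑ i ∈ I, w i * F i y ≤ β * (UB * ∑ i ∈ I, w i) :=
          mul_le_mul_of_nonneg_left (hIbound y) hβ0.le
      _ = β * (UB * ((ε' * LB) / (β * UB) * m)) := by rw [hwI]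
      _ = ε' * LB * m := by field_simp
  set T := ∑ j ∈ Iᶜ, w j * F j x' with hT
  have hTnn : 0 ≤ T := Finset.sum_nonneg fun j _ => hnn x' j
  have hsplit : ∑ i, w i * F i x' = ∑ i ∈ I, w i * F i x' + T :=
    (Finset.sum_add_sum_compl I _).symm
  have hS : ∑ j ∈ Iᶜ, w j * F j x ≤ ε' * LB * m + β * T := by
    calc ∑ j ∈ Iᶜ, w j * F j x ≤ ∑ i, w i * F i x := by
          rw [← Finset.sum_add_sum_compl I (fun i => w i * F i x)]
          have : 0 ≤ ∑ i ∈ I, w i * F i x := Finset.sum_nonneg fun i _ => hnn x i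
          linarith
      _ ≤ β * ∑ i, w i * F i x' := hx x'
      _ = β * ∑ i ∈ I, w i * F i x' + β * T := by rw [hsplit]; ring
      _ ≤ ε' * LB * m + β * T := by linarith [hkey x']
  by_cases hcase : m * LB ≤ T
  · calc ∑ j ∈ Iᶜ, w j * F j x ≤ ε' * LB * m + β * T := hS
      _ ≤ ε' * T + β * T := by nlinarith
      _ = (β + ε') * T := by ring
  · push_neg at hcase
    have hTzero : T = 0 := by
      apply Finset.sum_eq_zero
      intro j hj
      rcases hterm x' j hj with h | h
      · exact h
      · exfalso
        have hle : w j * F j x' ≤ T := Finset.single_le_sum (fun i _ => hnn x' i) hj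
        linarith
    have hmpos : 0 < m := by
      by_contra h
      push_neg at h
      have hmz : m = 0 := le_antisymm h hm0
      rw [hmz] at hcase
      simp at hcase
      linarith
    have hS' : ∑ j ∈ Iᶜ, w j * F j x ≤ ε' * LB * m := by
      rw [hTzero] at hS; linarith
    have hSzero : ∑ j ∈ Iᶜ, w j * F j x = 0 := by
      apply Finset.sum_eq_zero
      intro j hj
      rcases hterm x j hj with h | h
      · exact h
      · exfalso
        have hle : w j * F j x ≤ ∑ j ∈ Iᶜ, w j * F j x :=
          Finset.single_le_sum (fun i _ => hnn x i) hj
        nlinarith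
    rw [hSzero, hTzero]
    simp
end

section
/- Let c ∈ (0,1), let ∅ ≠ I ⊊ {0,...,K} be an index set, and let w ∈ ℝ^{K+1}_≥ satisfy ∑_{i∈I} w_i < c · min_{j∉I} w_j. Define the lifted weight w̄ by: w̄_i = (w_i / ∑_{j∈I} w_j) · c · min_{j∉I} w_j if i ∈ I and ∑_{j∈I} w_j > 0; w̄_i = (1/|I|) · c · min_{j∉I} w_j if i ∈ I and w_j = 0 for all j ∈ I; and w̄_i = w_i if i ∉ I. Then: (1) ∑_{i∈I} w̄_i = c · min_{j∉I} w̄_j; (2) w lies in the convex hull of {w̄, proj^I(w̄)}; and (3) w̄_i ≥ w_i for all i ∈ I. -/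
/-!
Write `S = ∑_{i∈I} w_i` and `T = c · min_{j∉I} w_j`, so `S ≤ T`. The lift rescales the
`I`-block of `w` to total mass `T` (uniformly if that block vanishes) and leaves the rest, in
particular the minimum over the complement, unchanged; this gives (1), and (3) because the
scaling factor `T / S` is at least one. Scaling the `I`-block back by `S / T ∈ [0, 1]` recovers
`w`, i.e. `w = (S / T) • w̄ + (1 - S / T) • proj^I(w̄)`, which is (2).
-/

open Finset

variable {ι : Type*}

theorem Finset.eq_zero_of_not_sum_pos {I : Finset ι} {w : ι → ℝ} (hw : ∀ i, 0 ≤ w i)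
    (hS : ¬0 < ∑ j ∈ I, w j) {i : ι} (hi : i ∈ I) : w i = 0 :=
  (sum_eq_zero_iff_of_nonneg fun j _ => hw j).mp
    (le_antisymm (not_lt.mp hS) (sum_nonneg fun j _ => hw j)) i hi

variable [DecidableEq ι]

noncomputable def liftWeight (I : Finset ι) (w : ι → ℝ) (T : ℝ) : ι → ℝ := fun i =>
  if i ∈ I then
    (if 0 < ∑ j ∈ I, w j then w i / (∑ j ∈ I, w j) * T else (1 / (I.card : ℝ)) * T)
  else w i

section

variable {I : Finset ι} {w : ι → ℝ} {T : ℝ}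

theorem liftWeight_of_notMem {i : ι} (hi : i ∉ I) : liftWeight I w T i = w i := if_neg hi

theorem sum_liftWeight (hI : I.Nonempty) : ∑ i ∈ I, liftWeight I w T i = T := by
  have hcard : (I.card : ℝ) ≠ 0 := by exact_mod_cast hI.card_pos.ne'
  by_cases hS : 0 < ∑ j ∈ I, w j
  · calc ∑ i ∈ I, liftWeight I w T i = ∑ i ∈ I, w i / (∑ j ∈ I, w j) * T :=
          sum_congr rfl fun i hi => by simp only [liftWeight, if_pos hi, if_pos hS]
      _ = T := by rw [← sum_mul, ← sum_div, div_self hS.ne', one_mul]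
  · calc ∑ i ∈ I, liftWeight I w T i = ∑ _i ∈ I, 1 / (I.card : ℝ) * T :=
          sum_congr rfl fun i hi => by simp only [liftWeight, if_pos hi, if_neg hS]
      _ = T := by rw [sum_const, nsmul_eq_mul]; field_simp

theorem inf'_compl_liftWeight [Fintype ι] (hIc : Iᶜ.Nonempty) :
    Iᶜ.inf' hIc (liftWeight I w T) = Iᶜ.inf' hIc w :=
  inf'_congr hIc rfl fun _ hj => liftWeight_of_notMem (mem_compl.mp hj)

variable (hw : ∀ i, 0 ≤ w i) (hST : ∑ j ∈ I, w j ≤ T)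
include hw hST

theorem le_liftWeight {i : ι} (hi : i ∈ I) : w i ≤ liftWeight I w T i := by
  simp only [liftWeight, if_pos hi]
  split_ifs with hS
  · calc w i = w i / (∑ j ∈ I, w j) * (∑ j ∈ I, w j) := (div_mul_cancel₀ _ hS.ne').symm
      _ ≤ w i / (∑ j ∈ I, w j) * T := by gcongr; exact div_nonneg (hw i) hS.le
  · rw [eq_zero_of_not_sum_pos hw hS hi]
    have hT : 0 ≤ T := (sum_nonneg fun j _ => hw j).trans hST
    positivity

theorem mem_segment_liftWeight :
    w ∈ segment ℝ (liftWeight I w T) (fun i => if i ∈ I then 0 else liftWeight I w T i) := by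
  have hS0 : 0 ≤ ∑ j ∈ I, w j := sum_nonneg fun j _ => hw j
  have hT0 : 0 ≤ T := hS0.trans hST
  refine ⟨(∑ j ∈ I, w j) / T, 1 - (∑ j ∈ I, w j) / T, div_nonneg hS0 hT0,
    sub_nonneg.mpr (div_le_one_of_le₀ hST hT0), add_sub_cancel _ _, funext fun i => ?_⟩
  simp only [Pi.add_apply, Pi.smul_apply, smul_eq_mul]
  by_cases hi : i ∈ I
  · simp only [liftWeight, if_pos hi, mul_zero, add_zero]
    split_ifs with hS
    · have hT : T ≠ 0 := (hS.trans_le hST).ne'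
      field_simp
    · have hS0' : ∑ j ∈ I, w j = 0 := le_antisymm (not_lt.mp hS) hS0
      simp [eq_zero_of_not_sum_pos hw hS hi, hS0']
  · simp only [liftWeight_of_notMem hi, if_neg hi]
    ring

end

theorem stmt3_general {K : ℕ} (c : ℝ)
    (I : Finset (Fin (K+1))) (hI : I.Nonempty) (hIc : Iᶜ.Nonempty)
    (w : Fin (K+1) → ℝ) (hw : ∀ i, 0 ≤ w i)
    (hlt : ∑ i ∈ I, w i < c * Iᶜ.inf' hIc w)
    (wbar : Fin (K+1) → ℝ)
    (hbar : ∀ i, wbar i =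
      if i ∈ I then
        (if 0 < ∑ j ∈ I, w j then w i / (∑ j ∈ I, w j) * (c * Iᶜ.inf' hIc w)
         else (1 / (I.card : ℝ)) * (c * Iᶜ.inf' hIc w))
      else w i) :
    (∑ i ∈ I, wbar i = c * Iᶜ.inf' hIc wbar) ∧
    w ∈ convexHull ℝ ({wbar, fun i => if i ∈ I then 0 else wbar i} :
        Set (Fin (K+1) → ℝ)) ∧
    ∀ i ∈ I, w i ≤ wbar i := by
  obtain rfl : wbar = liftWeight I w (c * Iᶜ.inf' hIc w) := funext hbar
  refine ⟨?_, ?_, fun i hi => le_liftWeight hw hlt.le hi⟩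
  · rw [inf'_compl_liftWeight, sum_liftWeight hI]
  · rw [convexHull_pair]
    exact mem_segment_liftWeight hw hlt.le

theorem stmt3 {K : ℕ} (c : ℝ) (hc : c ∈ Set.Ioo (0:ℝ) 1)
    (I : Finset (Fin (K+1))) (hI : I.Nonempty) (hIc : Iᶜ.Nonempty)
    (w : Fin (K+1) → ℝ) (hw : ∀ i, 0 ≤ w i)
    (hlt : ∑ i ∈ I, w i < c * Iᶜ.inf' hIc w)
    (wbar : Fin (K+1) → ℝ)
    (hbar : ∀ i, wbar i =
      if i ∈ I then
        (if 0 < ∑ j ∈ I, w j then w i / (∑ j ∈ I, w j) * (c * Iᶜ.inf' hIc w)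
         else (1 / (I.card : ℝ)) * (c * Iᶜ.inf' hIc w))
      else w i) :
    (∑ i ∈ I, wbar i = c * Iᶜ.inf' hIc wbar) ∧
    w ∈ convexHull ℝ ({wbar, fun i => if i ∈ I then 0 else wbar i} :
        Set (Fin (K+1) → ℝ)) ∧
    ∀ i ∈ I, w i ≤ wbar i :=
  stmt3_general c I hI hIc w hw hlt wbar hbar
end

section
/- Let c ∈ (0,1), let W_1 = {w ∈ ℝ^{K+1}_≥ : ∑_{i=0}^K w_i = 1} be the K-dimensional simplex, and let W^compact = W^cone ∩ W_1 where W^cone = ℝ^{K+1}_≥ \ ⋃_{∅≠I⊊{0,...,K}} P_<(I). Then every w ∈ W^compact satisfies w_i ≥ c^K / (K+1)! for all i ∈ {0,...,K}. -/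
lemma two_pow_le_fact (K : ℕ) : 2 ^ K ≤ (K+1).factorial := by
  induction K with
  | zero => simp
  | succ n ih =>
    rw [pow_succ, Nat.factorial_succ]
    calc 2 ^ n * 2 ≤ (n+1).factorial * 2 := by omega
    _ ≤ (n+1+1) * (n+1).factorial := by nlinarith [Nat.one_le_iff_ne_zero.mpr (Nat.factorial_ne_zero (n+1))]

theorem stmt7 {K : ℕ} (c : ℝ) (hc : c ∈ Set.Ioo (0:ℝ) 1)
    (w : Fin (K+1) → ℝ) (hw : ∀ i, 0 ≤ w i) (hsum : ∑ i, w i = 1)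
    (hcone : ∀ I : Finset (Fin (K+1)), I.Nonempty → I ≠ Finset.univ →
      ∃ j ∉ I, c * w j ≤ ∑ i ∈ I, w i) :
    ∀ i, c ^ K / ((K+1).factorial : ℝ) ≤ w i := by
  intro i
  obtain ⟨hc0, hc1⟩ := hc
  have key : ∀ k : ℕ, k ≤ K → ∃ S : Finset (Fin (K+1)),
      S.card = k + 1 ∧ ∑ j ∈ S, w j ≤ (1 + 1/c)^k * w i := by
    intro k hk
    induction k with
    | zero => exact ⟨{i}, by simp, by simp⟩
    | succ n ih =>
      obtain ⟨S, hcard, hsumS⟩ := ih (Nat.le_of_succ_le hk)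
      have hne : S ≠ Finset.univ := by
        intro h
        rw [h, Finset.card_univ, Fintype.card_fin] at hcard
        omega
      have hnonempty : S.Nonempty := Finset.card_pos.mp (by omega)
      obtain ⟨j, hjS, hj⟩ := hcone S hnonempty hne
      have hSnn : 0 ≤ ∑ x ∈ S, w x := Finset.sum_nonneg fun x _ => hw x
      have hwj : w j ≤ (1/c) * ∑ x ∈ S, w x := by
        rw [div_mul_eq_mul_div, le_div_iff₀ hc0]
        linarith
      refine ⟨insert j S, ?_, ?_⟩
      · rw [Finset.card_insert_of_notMem hjS, hcard]
      · rw [Finset.sum_insert hjS, pow_succ]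
        have h1 : w j + ∑ x ∈ S, w x ≤ (1 + 1/c) * ∑ x ∈ S, w x := by
          rw [add_mul, one_mul]; linarith
        have h2 : (1 + 1/c) * ∑ x ∈ S, w x ≤ (1 + 1/c) * ((1 + 1/c)^n * w i) := by
          apply mul_le_mul_of_nonneg_left hsumS
          positivity
        calc w j + ∑ x ∈ S, w x ≤ (1 + 1/c) * ((1 + 1/c)^n * w i) := le_trans h1 h2
        _ = (1 + 1/c)^n * (1 + 1/c) * w i := by ring
  obtain ⟨S, hcard, hS⟩ := key K le_rfl
  have hSu : S = Finset.univ := Finset.eq_univ_of_card S (by simp [hcard])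
  rw [hSu, hsum] at hS
  -- 1 ≤ (1+1/c)^K * w i
  have hP : (0:ℝ) < (1 + 1/c)^K := by positivity
  have hwi : ((1 + 1/c)^K)⁻¹ ≤ w i := by
    rw [inv_le_iff_one_le_mul₀ hP]
    linarith [hS]
  have hfac : (0:ℝ) < ((K+1).factorial : ℝ) := by positivity
  have hbound : c ^ K * (1 + 1/c)^K ≤ ((K+1).factorial : ℝ) := by
    have : c ^ K * (1 + 1/c)^K = (c + 1)^K := by
      rw [← mul_pow]; congr 1; field_simp
    rw [this]
    calc (c + 1)^K ≤ 2^K := by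
          apply pow_le_pow_left₀ (by linarith) (by linarith)
    _ ≤ ((K+1).factorial : ℝ) := by exact_mod_cast two_pow_le_fact K
  calc c ^ K / ((K+1).factorial : ℝ) ≤ c ^ K / (c ^ K * (1 + 1/c)^K) := by
        apply div_le_div_of_nonneg_left (by positivity) (by positivity) hbound
  _ = ((1 + 1/c)^K)⁻¹ := by
        rw [div_mul_eq_div_div, div_self (by positivity), one_div]
  _ ≤ w i := hwi
end

section
/- Let c ∈ (0,1) and suppose w ∈ ℝ^{K+1} satisfies w_0 ≤ w_1 ≤ ... ≤ w_K, ∑_{i=0}^K w_i = 1, and ∑_{i=0}^{k} w_i ≥ c · w_{k+1} for all k ∈ {0,...,K−1}. Then w_i ≥ c^K / (K+1)! for every i ∈ {0,...,K}. In particular, w_0 ≥ c^K/(K+1)! > 0. -/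
theorem stmt8 (K : ℕ) (c : ℝ) (hc : c ∈ Set.Ioo (0:ℝ) 1) (w : ℕ → ℝ)
    (hmono : ∀ k < K, w k ≤ w (k+1))
    (hsum : ∑ i ∈ Finset.range (K+1), w i = 1)
    (hchain : ∀ k < K, c * w (k+1) ≤ ∑ i ∈ Finset.range (k+1), w i) :
    (∀ i ≤ K, c ^ K / ((K+1).factorial : ℝ) ≤ w i) ∧ 0 < w 0 := by
  obtain ⟨hc0, hc1⟩ := hc
  have hfac : (0:ℝ) < ((K+1).factorial : ℝ) := by
    exact_mod_cast Nat.factorial_pos (K+1)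
  -- monotonicity
  have hmono' : ∀ j, j ≤ K → ∀ i, i ≤ j → w i ≤ w j := by
    intro j
    induction j with
    | zero => intro _ i hi; simp [Nat.le_zero.mp hi]
    | succ n ih =>
      intro hj i hi
      rcases eq_or_lt_of_le hi with h | h
      · rw [h]
      · have hin : i ≤ n := Nat.lt_succ_iff.mp h
        calc w i ≤ w n := ih (Nat.le_of_succ_le hj) i hin
          _ ≤ w (n+1) := hmono n hj
  -- sum bound
  have hsumle : ∀ m, m ≤ K → ∑ i ∈ Finset.range (m+1), w i ≤ (m+1 : ℝ) * w m := by
    intro m hm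
    calc ∑ i ∈ Finset.range (m+1), w i
        ≤ ∑ _i ∈ Finset.range (m+1), w m := by
          apply Finset.sum_le_sum
          intro i hi
          exact hmono' m hm i (Nat.lt_succ_iff.mp (Finset.mem_range.mp hi))
      _ = (m+1 : ℝ) * w m := by
          simp [Finset.sum_const, Finset.card_range, nsmul_eq_mul]
  have key : ∀ j, j ≤ K → c ^ j * ((K - j).factorial : ℝ) / ((K+1).factorial : ℝ)
      ≤ w (K - j) := by
    intro j
    induction j with
    | zero =>
      intro _
      have h1 : (1:ℝ) ≤ (K+1 : ℝ) * w K := by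
        calc (1:ℝ) = ∑ i ∈ Finset.range (K+1), w i := hsum.symm
          _ ≤ (K+1 : ℝ) * w K := hsumle K le_rfl
      have hfs : ((K+1).factorial : ℝ) = (K+1 : ℝ) * (K.factorial : ℝ) := by
        push_cast [Nat.factorial_succ]; ring
      have hKpos : (0:ℝ) < (K+1 : ℝ) := by positivity
      have hKfac : (0:ℝ) < (K.factorial : ℝ) := by exact_mod_cast Nat.factorial_pos K
      simp only [Nat.sub_zero, pow_zero, one_mul]
      rw [hfs, div_le_iff₀ (by positivity)]
      nlinarith
    | succ j ih =>
      intro hj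
      have hjK : j ≤ K := Nat.le_of_succ_le hj
      set k := K - (j+1) with hk
      have hk1 : K - j = k + 1 := by omega
      have hkK : k < K := by omega
      have hih : c ^ j * ((k+1).factorial : ℝ) / ((K+1).factorial : ℝ) ≤ w (k+1) := by
        have := ih hjK
        rwa [hk1] at this
      have h1 : c * w (k+1) ≤ (k+1 : ℝ) * w k :=
        le_trans (hchain k hkK) (hsumle k (le_of_lt hkK))
      have h2 : c * (c ^ j * ((k+1).factorial : ℝ) / ((K+1).factorial : ℝ)) ≤ c * w (k+1) :=
        mul_le_mul_of_nonneg_left hih hc0.le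
      have hfs : ((k+1).factorial : ℝ) = (k+1 : ℝ) * (k.factorial : ℝ) := by
        push_cast [Nat.factorial_succ]; ring
      have hkpos : (0:ℝ) < (k+1 : ℝ) := by positivity
      have hkfac : (0:ℝ) < (k.factorial : ℝ) := by exact_mod_cast Nat.factorial_pos k
      have h3 : c ^ (j+1) * ((k+1:ℝ) * (k.factorial : ℝ)) / ((K+1).factorial : ℝ)
          ≤ (k+1 : ℝ) * w k := by
        calc c ^ (j+1) * ((k+1:ℝ) * (k.factorial : ℝ)) / ((K+1).factorial : ℝ)
            = c * (c ^ j * ((k+1).factorial : ℝ) / ((K+1).factorial : ℝ)) := by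
              rw [hfs]; ring
          _ ≤ c * w (k+1) := h2
          _ ≤ (k+1 : ℝ) * w k := h1
      have hgoal : c ^ (j+1) * ((k).factorial : ℝ) / ((K+1).factorial : ℝ) ≤ w k := by
        have hcj : (0:ℝ) < c ^ (j+1) := by positivity
        rw [div_le_iff₀ hfac] at h3 ⊢
        nlinarith
      exact hgoal
  have h0 : c ^ K / ((K+1).factorial : ℝ) ≤ w 0 := by
    have := key K le_rfl
    simpa [Nat.sub_self, Nat.factorial_zero] using this
  constructor
  · intro i hi
    exact le_trans h0 (hmono' i hi 0 (Nat.zero_le i))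
  · have : (0:ℝ) < c ^ K / ((K+1).factorial : ℝ) := by positivity
    linarith
end

section
/- Let K ∈ ℕ, β > 1, and consider solutions x, x^0, ..., x^K with objective vectors F(x) = ((K+1)β, ..., (K+1)β) ∈ ℝ^{K+1} and, for each i ∈ {0,...,K}, F_i(x^i) = K+1 and F_j(x^i) = (K+2)β − 1 for j ≠ i. Then for every weight w in the simplex W_1 = {w ∈ ℝ^{K+1}_≥ : ∑_i w_i = 1}, there exists an index i with w_i ≥ 1/(K+1), and for this index, w^⊤F(x^i) < w^⊤F(x); in particular, x is never a minimizer of w ↦ w^⊤F(·) over {x, x^0, ..., x^K} for any w ∈ W_1. -/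
theorem stmt11 (K : ℕ) (β : ℝ) (hβ : 1 < β)
    (w : Fin (K+1) → ℝ) (hw : ∀ i, 0 ≤ w i) (hsum : ∑ i, w i = 1) :
    ∃ i : Fin (K+1), (1 : ℝ) / (K+1) ≤ w i ∧
      ∑ j, w j * (if j = i then ((K:ℝ)+1) else ((K:ℝ)+2) * β - 1) <
        ∑ j, w j * (((K:ℝ)+1) * β) := by
  have hK : (0:ℝ) < (K:ℝ) + 1 := by positivity
  -- find i with w i ≥ 1/(K+1)
  have hex : ∃ i : Fin (K+1), (1 : ℝ) / (K+1) ≤ w i := by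
    by_contra h
    push_neg at h
    have : ∑ i, w i < ∑ _i : Fin (K+1), (1:ℝ)/(K+1) :=
      Finset.sum_lt_sum_of_nonempty Finset.univ_nonempty (fun i _ => h i)
    rw [hsum, Finset.sum_const, Finset.card_univ, Fintype.card_fin, nsmul_eq_mul] at this
    push_cast at this
    rw [mul_one_div, div_self (ne_of_gt hK)] at this
    exact lt_irrefl _ this
  obtain ⟨i, hi⟩ := hex
  refine ⟨i, hi, ?_⟩
  have hL : ∑ j, w j * (if j = i then ((K:ℝ)+1) else ((K:ℝ)+2) * β - 1)
      = (((K:ℝ)+2) * β - 1) + w i * (((K:ℝ)+1) - (((K:ℝ)+2) * β - 1)) := by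
    have : ∀ j : Fin (K+1),
        w j * (if j = i then ((K:ℝ)+1) else ((K:ℝ)+2) * β - 1)
        = w j * (((K:ℝ)+2) * β - 1)
          + (if j = i then w j * (((K:ℝ)+1) - (((K:ℝ)+2) * β - 1)) else 0) := by
      intro j; by_cases hj : j = i <;> simp [hj] <;> ring
    rw [Finset.sum_congr rfl (fun j _ => this j), Finset.sum_add_distrib,
      ← Finset.sum_mul, hsum, Finset.sum_ite_eq' Finset.univ i]
    simp
  have hR : ∑ j, w j * (((K:ℝ)+1) * β) = ((K:ℝ)+1) * β := by
    rw [← Finset.sum_mul, hsum, one_mul]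
  rw [hL, hR]
  have h1 : (1:ℝ)/((K:ℝ)+1) * (((K:ℝ)+2) * (β - 1)) ≤ w i * (((K:ℝ)+2) * (β - 1)) := by
    apply mul_le_mul_of_nonneg_right hi
    nlinarith
  have h2 : β - 1 < (1:ℝ)/((K:ℝ)+1) * (((K:ℝ)+2) * (β - 1)) := by
    rw [div_mul_eq_mul_div, one_mul, lt_div_iff₀ hK]
    nlinarith
  nlinarith
end

section
/- Let K ∈ ℕ, β ≥ 1, and consider solutions x, x^0, ..., x^K with F(x) = ((K+1)β, ..., (K+1)β) and, for each i ∈ {0,...,K}, F_i(x^i) = K+1 and F_j(x^i) = (K+2)β − 1 for j ≠ i. Then for every w ∈ ℝ^{K+1}_≥ with ∑_i w_i = 1 and every i ∈ {0,...,K}, it holds that w^⊤F(x) ≤ β · w^⊤F(x^i). That is, the solution x is a β-approximation for every weight in the simplex. -/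
theorem stmt12 (K : ℕ) (β : ℝ) (hβ : 1 ≤ β)
    (w : Fin (K+1) → ℝ) (hw : ∀ i, 0 ≤ w i) (hsum : ∑ i, w i = 1)
    (i : Fin (K+1)) :
    ∑ j, w j * (((K:ℝ)+1) * β) ≤
      β * ∑ j, w j * (if j = i then ((K:ℝ)+1) else ((K:ℝ)+2) * β - 1) := by
  have h0 : (0:ℝ) ≤ β := le_trans zero_le_one hβ
  have hL : ∑ j, w j * (((K:ℝ)+1) * β) = ((K:ℝ)+1) * β := by
    rw [← Finset.sum_mul, hsum, one_mul]
  rw [hL]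
  have key : ((K:ℝ)+1) ≤ ∑ j, w j * (if j = i then ((K:ℝ)+1) else ((K:ℝ)+2) * β - 1) := by
    calc ((K:ℝ)+1) = ∑ j, w j * ((K:ℝ)+1) := by rw [← Finset.sum_mul, hsum, one_mul]
    _ ≤ _ := by
        apply Finset.sum_le_sum
        intro j _
        apply mul_le_mul_of_nonneg_left _ (hw j)
        have hK : (0:ℝ) ≤ (K:ℝ) := Nat.cast_nonneg K
        split
        · exact le_refl _
        · nlinarith
  nlinarith [mul_le_mul_of_nonneg_left key h0]
end

section
/- Let K ∈ ℕ, β > 1, and consider the solutions x^0, ..., x^K with, for each i ∈ {0,...,K}, F_i(x^i) = K+1 and F_j(x^i) = (K+2)β − 1 for j ≠ i. For every i ∈ {0,...,K}, letting e^i be the i-th unit vector in ℝ^{K+1}, it holds for every j ≠ i that β · (e^i)^⊤F(x^i) < (e^i)^⊤F(x^j). Consequently, any subset S ⊆ {x^0,...,x^K} that contains, for each unit weight e^i, a solution y with (e^i)^⊤F(y) ≤ β · min_{j} (e^i)^⊤F(x^j) must equal {x^0,...,x^K}. -/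
theorem stmt13 (K : ℕ) (β : ℝ) (hβ : 1 < β)
    (F : Fin (K+1) → Fin (K+1) → ℝ)
    (hF : ∀ i j, F i j = if j = i then ((K:ℝ)+1) else ((K:ℝ)+2) * β - 1) :
    (∀ i j : Fin (K+1), j ≠ i → β * F i i < F j i) ∧
    ∀ S : Finset (Fin (K+1)),
      (∀ i : Fin (K+1), ∃ y ∈ S,
        F y i ≤ β * Finset.univ.inf' Finset.univ_nonempty (fun j => F j i)) →
      S = Finset.univ := by
  have hK : (0:ℝ) ≤ (K:ℝ) := Nat.cast_nonneg K
  have hdiag : ∀ i : Fin (K+1), F i i = (K:ℝ)+1 := by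
    intro i; rw [hF]; simp
  have hoff : ∀ i j : Fin (K+1), j ≠ i → F j i = ((K:ℝ)+2) * β - 1 := by
    intro i j h; rw [hF]; simp [Ne.symm h]
  have hkey : β * ((K:ℝ)+1) < ((K:ℝ)+2) * β - 1 := by nlinarith
  have hlt : (K:ℝ)+1 < ((K:ℝ)+2) * β - 1 := by nlinarith
  have hinf : ∀ i : Fin (K+1),
      Finset.univ.inf' Finset.univ_nonempty (fun j => F j i) = (K:ℝ)+1 := by
    intro i
    apply le_antisymm
    · exact le_of_le_of_eq (Finset.inf'_le _ (Finset.mem_univ i)) (hdiag i)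
    · apply Finset.le_inf'
      intro j _
      by_cases h : j = i
      · subst h; rw [hdiag]
      · rw [hoff i j h]; exact le_of_lt hlt
  constructor
  · intro i j h
    rw [hdiag, hoff i j h]; exact hkey
  · intro S hS
    apply Finset.eq_univ_of_forall
    intro i
    obtain ⟨y, hyS, hy⟩ := hS i
    rw [hinf i] at hy
    by_cases h : y = i
    · subst h; exact hyS
    · exfalso
      rw [hoff i y h] at hy
      linarith
end
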